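/- arXiv:1112.6142 — 3 statements merged into one kernel-verified Lean document; each statement's English description precedes it below -/
import Mathlib

section
/- For every real number α and every integer n ≥ 1, the minimum of ‖φ^{n-1}α‖, ‖φ^n α‖ and ‖φ^{n+1}α‖ is at most 1/3. -/
/-- Distance from a real number to the nearest integer. -/
noncomputable def distNearestInt (x : ℝ) : ℝ := |x - round x|

/-- The golden ratio. -/
noncomputable def φ : ℝ := (1 + Real.sqrt 5) / 2

/-!
Since `φ ^ (n + 1) = φ ^ (n - 1) + φ ^ n`, it suffices that for all reals `x, y` one of `x`, `y`,
`x + y` lies within `1/3` of an integer. Write `x = p + a`, `y = q + b` with `p, q ∈ ℤ` and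
`|a|, |b| ≤ 1/2`. If `|a|, |b| > 1/3`, then `a + b` lies within `1/3` of `-1`, `0` or `1`,
according to the signs of `a` and `b`.
-/

lemma distNearestInt_le (x : ℝ) (m : ℤ) : distNearestInt x ≤ |x - m| := round_le x m

lemma exists_int_abs_add_sub_le_third {a b : ℝ} (ha : 1 / 3 < |a|) (ha' : |a| ≤ 1 / 2)
    (hb : 1 / 3 < |b|) (hb' : |b| ≤ 1 / 2) : ∃ k : ℤ, |a + b - k| ≤ 1 / 3 := by
  rcases abs_cases a with ⟨habs_a, a_nonneg⟩ | ⟨habs_a, a_neg⟩ <;>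
    rcases abs_cases b with ⟨habs_b, b_nonneg⟩ | ⟨habs_b, b_neg⟩ <;>
    rw [habs_a] at ha ha' <;> rw [habs_b] at hb hb'
  · exact ⟨1, abs_le.mpr ⟨by push_cast; linarith, by push_cast; linarith⟩⟩
  · exact ⟨0, abs_le.mpr ⟨by push_cast; linarith, by push_cast; linarith⟩⟩
  · exact ⟨0, abs_le.mpr ⟨by push_cast; linarith, by push_cast; linarith⟩⟩
  · exact ⟨-1, abs_le.mpr ⟨by push_cast; linarith, by push_cast; linarith⟩⟩

theorem min_distNearestInt_add_le_third (x y : ℝ) :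
    min (min (distNearestInt x) (distNearestInt y)) (distNearestInt (x + y)) ≤ 1 / 3 := by
  by_contra! h
  obtain ⟨⟨hx, hy⟩, hxy⟩ : (1 / 3 < distNearestInt x ∧ 1 / 3 < distNearestInt y) ∧
      1 / 3 < distNearestInt (x + y) := by simpa only [lt_min_iff] using h
  obtain ⟨k, hk⟩ := exists_int_abs_add_sub_le_third hx (abs_sub_round x) hy (abs_sub_round y)
  have hshift : x + y - ((round x + round y + k : ℤ) : ℝ) = x - round x + (y - round y) - k := by
    push_cast; ring
  have := distNearestInt_le (x + y) (round x + round y + k)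
  rw [hshift] at this
  linarith

lemma φ_pow_add_two (n : ℕ) : φ ^ (n + 2) = φ ^ n + φ ^ (n + 1) := by
  have := Real.goldenRatio_pow_sub_goldenRatio_pow n
  rw [φ]
  linarith

theorem golden_powers_three_consecutive_close (α : ℝ) (n : ℕ) (hn : 1 ≤ n) :
    min (min (distNearestInt (φ ^ (n - 1) * α))
             (distNearestInt (φ ^ n * α)))
        (distNearestInt (φ ^ (n + 1) * α)) ≤ 1 / 3 := by
  obtain ⟨m, rfl⟩ := Nat.exists_eq_add_of_le' hn
  rw [Nat.add_sub_cancel, φ_pow_add_two, add_mul]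
  exact min_distNearestInt_add_le_third _ _
end

section
/- For every real number α, the infimum over all positive integers n of ‖F_n α‖ is at most (φ−1)/(φ+2). -/
open Nat (fib fib_add_two)

lemma distNearestInt_natCast_mul_le (k : ℕ) (α : ℝ) (m : ℤ) :
    distNearestInt (k * α) ≤ |k * |α - round α| - m| := by
  rcases abs_choice (α - round α) with h | h <;> rw [h]
  · calc distNearestInt (k * α) ≤ |k * α - ((k * round α + m : ℤ) : ℝ)| := round_le _ _
      _ = |k * (α - round α) - m| := by push_cast; ring_nf
  · calc distNearestInt (k * α) ≤ |k * α - ((k * round α - m : ℤ) : ℝ)| := round_le _ _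
      _ = |k * -(α - round α) - m| := by rw [← abs_neg]; push_cast; ring_nf

lemma fib_add_four (n : ℕ) : fib (n + 4) = 2 * fib n + 3 * fib (n + 1) := by
  simp only [fib_add_two]; ring

lemma fib_add_five (n : ℕ) : fib (n + 5) = 3 * fib n + 5 * fib (n + 1) := by
  simp only [fib_add_two]; ring

lemma fib_succ_sq_sub_fib_mul_fib_succ_sub_fib_sq (n : ℕ) :
    (fib (n + 1) : ℝ) ^ 2 - fib n * fib (n + 1) - fib n ^ 2 = (-1) ^ n := by
  have hφ := Real.fib_succ_sub_goldenRatio_mul_fib n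
  have hψ := Real.fib_succ_sub_goldenConj_mul_fib n
  calc (fib (n + 1) : ℝ) ^ 2 - fib n * fib (n + 1) - fib n ^ 2
      = (fib (n + 1) - Real.goldenRatio * fib n) * (fib (n + 1) - Real.goldenConj * fib n) := by
        linear_combination (fib n : ℝ) * fib (n + 1) * Real.goldenRatio_add_goldenConj
          - (fib n : ℝ) ^ 2 * Real.goldenRatio_mul_goldenConj
    _ = (-1) ^ n := by rw [hφ, hψ, ← mul_pow, Real.goldenConj_mul_goldenRatio]

lemma φ_eq_goldenRatio : φ = Real.goldenRatio := rfl

lemma fib_succ_le_φ_mul_add_one (n : ℕ) : (fib (n + 1) : ℝ) ≤ φ * fib n + 1 := by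
  have h := Real.fib_succ_sub_goldenRatio_mul_fib n
  have hψ : |Real.goldenConj| ≤ 1 :=
    abs_le.mpr ⟨Real.neg_one_lt_goldenConj.le, Real.goldenConj_neg.le.trans zero_le_one⟩
  have : Real.goldenConj ^ n ≤ 1 :=
    (le_abs_self _).trans ((abs_pow _ n).trans_le (pow_le_one₀ (abs_nonneg _) hψ))
  rw [φ_eq_goldenRatio]; linarith

lemma φ_sub_one_div_φ_add_two : (φ - 1) / (φ + 2) = (3 * φ - 4) / 5 := by
  have hφ : φ ^ 2 = φ + 1 := φ_eq_goldenRatio ▸ Real.goldenRatio_sq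
  have hpos : 0 < φ + 2 := by linarith [φ_eq_goldenRatio ▸ Real.goldenRatio_pos]
  rw [div_eq_div_iff hpos.ne' (by norm_num)]
  linear_combination -3 * hφ

lemma sub_lt_mul_of_add_le_mul {a b m t β : ℝ} (ha : 0 < a) (hb : 0 ≤ b) (hba : b + 6 ≤ 3 * a)
    (hcas : b ^ 2 - a * b - a ^ 2 = 1) (hm : 5 * m = 3 * a - b - 1) (ht : 1 / 6 < t)
    (hlow : m + t ≤ a * β) : m + b - t < (2 * a + 3 * b) * β := by
  -- after clearing `β`, `hm` and `hcas` reduce the claim to `3 + a + 3 * b < 15 * (a + b) * t`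
  have key : a * (m + b - t) < (2 * a + 3 * b) * (m + t) := by
    nlinarith [mul_lt_mul_of_pos_left ht (add_pos_of_pos_of_nonneg ha hb)]
  have := mul_le_mul_of_nonneg_left hlow (by positivity : (0 : ℝ) ≤ 2 * a + 3 * b)
  nlinarith

lemma sub_mul_le_of_add_le_mul {a b m t β : ℝ} (ha : 0 ≤ a) (ht : 0 ≤ t)
    (hb : b ≤ φ * a + 1) (hm : 5 * m = 3 * a - b - 1)
    (hlow : m + t ≤ a * β) (hβ : 3 * β ≤ 1 - t) : (t - (3 * φ - 4) / 5) * a ≤ 6 / 5 := by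
  -- `5 * t * (a + 3) ≤ 3 * b + 3 - 4 * a ≤ (3 * φ - 4) * a + 6`
  have := mul_le_mul_of_nonneg_left hβ ha
  nlinarith

lemma three_mul_le_one_sub_and_two_add_le_eight_mul {β t : ℝ} (hβ0 : 0 ≤ β) (hβ : β ≤ 1 / 2)
    (ht : 1 / 6 < t)
    (h : ∀ n, 0 < n → ∀ m : ℤ, t ≤ |(fib n : ℝ) * β - m|) :
    3 * β ≤ 1 - t ∧ 2 + t ≤ 8 * β := by
  have hF (n : ℕ) (hn : 0 < n) (m : ℤ) : fib n * β - m ≤ -t ∨ t ≤ fib n * β - m :=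
    le_abs'.mp (h n hn m)
  have h1 := hF 1 (by norm_num) 0
  have h3 := hF 3 (by norm_num) 1
  have h4 := hF 4 (by norm_num) 1
  have h5 := hF 5 (by norm_num) 1
  have h5' := hF 5 (by norm_num) 2
  have h6 := hF 6 (by norm_num) 2
  norm_num [fib_add_two] at h1 h3 h4 h5 h5' h6
  have hβt : t ≤ β := h1.resolve_left (by linarith)
  have h2β : 2 * β ≤ 1 - t := by rcases h3 with h3 | h3 <;> linarith
  have h3β : 3 * β ≤ 1 - t := by
    rcases h4 with h4 | h4
    · linarith
    · rcases h5' with h5' | h5' <;> linarith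
  have h5β : t ≤ 5 * β - 1 := h5.resolve_left (by linarith)
  exact ⟨h3β, by linarith [h6.resolve_left (by linarith)]⟩

lemma fib_succ_add_six_le {n : ℕ} (hn : 5 ≤ n) : fib (n + 1) + 6 ≤ 3 * fib n := by
  obtain ⟨k, rfl⟩ := Nat.exists_eq_add_of_le' hn
  have : 0 < fib (k + 1) := Nat.fib_pos.mpr k.succ_pos
  simp only [fib_add_two]
  omega

lemma exists_int_add_le_fib_mul {β t : ℝ} (hβ0 : 0 ≤ β) (hβ : β ≤ 1 / 2) (ht : 1 / 6 < t)
    (h : ∀ n, 0 < n → ∀ m : ℤ, t ≤ |(fib n : ℝ) * β - m|) (j : ℕ) :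
    ∃ m : ℤ, 5 * (m : ℝ) = 3 * fib (4 * j + 6) - fib (4 * j + 7) - 1 ∧
      m + t ≤ fib (4 * j + 6) * β := by
  induction j with
  | zero =>
    refine ⟨2, by norm_num [fib_add_two], ?_⟩
    norm_num [fib_add_two]
    exact (three_mul_le_one_sub_and_two_add_le_eight_mul hβ0 hβ ht h).2
  | succ j ih =>
    obtain ⟨m, hm, hlow⟩ := ih
    have hba : (fib (4 * j + 7) : ℝ) + 6 ≤ 3 * fib (4 * j + 6) := by
      exact_mod_cast fib_succ_add_six_le (n := 4 * j + 6) (by omega)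
    set a : ℝ := ↑(fib (4 * j + 6))
    set b : ℝ := ↑(fib (4 * j + 7))
    have ha' : (fib (4 * (j + 1) + 6) : ℝ) = 2 * a + 3 * b := by
      rw [show 4 * (j + 1) + 6 = 4 * j + 6 + 4 by ring, fib_add_four]; push_cast; rfl
    have hb' : (fib (4 * (j + 1) + 7) : ℝ) = 3 * a + 5 * b := by
      rw [show 4 * (j + 1) + 7 = 4 * j + 6 + 5 by ring, fib_add_five]; push_cast; rfl
    have hcas : b ^ 2 - a * b - a ^ 2 = 1 := by
      have := fib_succ_sq_sub_fib_mul_fib_succ_sub_fib_sq (4 * j + 6)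
      rwa [Even.neg_one_pow ⟨2 * j + 3, by ring⟩] at this
    have ha : 0 < a := Nat.cast_pos.mpr (Nat.fib_pos.mpr (by omega))
    have hstep := sub_lt_mul_of_add_le_mul ha (by positivity) hba hcas hm ht hlow
    refine ⟨m + fib (4 * j + 7), by push_cast; rw [ha', hb']; linarith, ?_⟩
    have := h (4 * (j + 1) + 6) (by omega) (m + fib (4 * j + 7))
    push_cast at this ⊢
    rw [ha'] at this ⊢
    rcases le_abs'.mp this with h' | h' <;> linarith

theorem le_of_forall_le_abs_fib_mul_sub {β t : ℝ} (hβ0 : 0 ≤ β) (hβ : β ≤ 1 / 2)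
    (h : ∀ n, 0 < n → ∀ m : ℤ, t ≤ |(fib n : ℝ) * β - m|) : t ≤ (φ - 1) / (φ + 2) := by
  rw [φ_sub_one_div_φ_add_two]
  by_contra! htc
  have hsqrt : (20 : ℝ) / 9 < √5 := Real.lt_sqrt_of_sq_lt (by norm_num)
  have ht : 1 / 6 < t := by unfold φ at htc; linarith
  obtain ⟨j, hj⟩ := exists_nat_gt (6 / 5 / (t - (3 * φ - 4) / 5))
  rw [div_lt_iff₀ (sub_pos.mpr htc)] at hj
  obtain ⟨m, hm, hlow⟩ := exists_int_add_le_fib_mul hβ0 hβ ht h j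
  have h3β := (three_mul_le_one_sub_and_two_add_le_eight_mul hβ0 hβ ht h).1
  have hbound := sub_mul_le_of_add_le_mul (by positivity) (by linarith)
    (fib_succ_le_φ_mul_add_one _) hm hlow h3β
  have hj' : (j : ℝ) ≤ fib (4 * j + 6) := by
    exact_mod_cast (by omega : j ≤ 4 * j + 6).trans (Nat.le_fib_self (by omega))
  nlinarith

theorem inf_fib_dist_le (α : ℝ) :
    ⨅ n : ℕ+, distNearestInt ((Nat.fib n : ℝ) * α) ≤ (φ - 1) / (φ + 2) := by
  have hbdd : BddBelow (Set.range fun n : ℕ+ => distNearestInt ((fib n : ℝ) * α)) :=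
    ⟨0, by rintro _ ⟨n, rfl⟩; exact abs_nonneg _⟩
  refine le_of_forall_le_abs_fib_mul_sub (abs_nonneg _) (abs_sub_round α) fun n hn m => ?_
  exact (ciInf_le hbdd ⟨n, hn⟩).trans (distNearestInt_natCast_mul_le _ _ m)
end

section
/- For every integer t ≥ 1 the following closed-form expressions hold: 5·T_{4t} = 2F_{4t} − F_{4t−1} + 1, 5·T_{4t+1} = F_{4t} + 2F_{4t−1} − 2, 5·T_{4t+2} = 3F_{4t} + F_{4t−1} − 1, and 5·T_{4t+3} = 4F_{4t} + 3F_{4t−1} + 2. -/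
/-! Splitting off the first summand gives `T (n + 2) = F n - T n`. The Lucas numbers satisfy
`L n + L (n + 2) = 5 F (n + 1)`, so the defect `5 T (n + 1) - L n` changes sign when `n` grows
by 2 and is therefore 4-periodic, with values `1, -2, -1, 2` at `n = 3, 4, 5, 6`. Writing
`L (4t - 1 + j)` for `j ≤ 3` in terms of `F (4t)` and `F (4t - 1)` gives the four formulas. -/

/-- `T n = Σ_{k=1}^{⌊n/2⌋} (−1)^{k+1} F_{n−2k}`. -/
def T (n : ℕ) : ℤ := ∑ k ∈ Finset.Icc 1 (n / 2), (-1 : ℤ) ^ (k + 1) * (Nat.fib (n - 2 * k) : ℤ)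

open Finset in
theorem T_add_two (n : ℕ) : T (n + 2) = Nat.fib n - T n := by
  have hdiv : (n + 2) / 2 = n / 2 + 1 := by omega
  rw [T, T, hdiv, ← Ico_add_one_right_eq_Icc, ← Ico_add_one_right_eq_Icc,
    sum_eq_sum_Ico_succ_bot (by omega), ← sum_Ico_add', sub_eq_add_neg, ← sum_neg_distrib]
  congr 1
  · simp
  · refine sum_congr rfl fun k _ => ?_
    rw [show n + 2 - 2 * (k + 1) = n - 2 * k by omega, pow_succ]
    ring

-- `L n = F (n - 1) + F (n + 1)`, written so that `n = 0` needs no `F (-1)`.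
def lucas (n : ℕ) : ℤ := 2 * Nat.fib (n + 1) - Nat.fib n

theorem lucas_add_lucas_add_two (n : ℕ) : lucas n + lucas (n + 2) = 5 * Nat.fib (n + 1) := by
  have h2 : (Nat.fib (n + 2) : ℤ) = Nat.fib n + Nat.fib (n + 1) := mod_cast Nat.fib_add_two
  have h3 : (Nat.fib (n + 3) : ℤ) = Nat.fib (n + 1) + Nat.fib (n + 2) := mod_cast Nat.fib_add_two
  rw [lucas, lucas, h3, h2]
  ring

theorem antiperiodic_five_mul_T_succ_sub_lucas :
    Function.Antiperiodic (fun n => 5 * T (n + 1) - lucas n) 2 := fun n => by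
  have h := lucas_add_lucas_add_two n
  have hT := T_add_two (n + 1)
  simp only
  linarith

theorem five_mul_T_four_mul_add_add_one {j : ℕ} {c : ℤ} (hj : 5 * T (j + 1) - lucas j = c)
    (s : ℕ) : 5 * T (4 * s + j + 1) = lucas (4 * s + j) + c := by
  have h := antiperiodic_five_mul_T_succ_sub_lucas.periodic_two_mul.nat_mul s j
  simp only [Nat.cast_id, show j + s * (2 * 2) = 4 * s + j by ring] at h
  linarith

theorem T_closed_forms (t : ℕ) (ht : 1 ≤ t) :
    5 * T (4 * t) = 2 * (Nat.fib (4 * t) : ℤ) - (Nat.fib (4 * t - 1) : ℤ) + 1 ∧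
    5 * T (4 * t + 1) = (Nat.fib (4 * t) : ℤ) + 2 * (Nat.fib (4 * t - 1) : ℤ) - 2 ∧
    5 * T (4 * t + 2) = 3 * (Nat.fib (4 * t) : ℤ) + (Nat.fib (4 * t - 1) : ℤ) - 1 ∧
    5 * T (4 * t + 3) = 4 * (Nat.fib (4 * t) : ℤ) + 3 * (Nat.fib (4 * t - 1) : ℤ) + 2 := by
  obtain ⟨s, rfl⟩ : ∃ s, t = s + 1 := ⟨t - 1, by omega⟩
  have e3 : 5 * T (4 * s + 3 + 1) = lucas (4 * s + 3) + 1 :=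
    five_mul_T_four_mul_add_add_one (by decide) s
  have e4 : 5 * T (4 * s + 4 + 1) = lucas (4 * s + 4) - 2 :=
    five_mul_T_four_mul_add_add_one (by decide) s
  have e5 : 5 * T (4 * s + 5 + 1) = lucas (4 * s + 5) - 1 :=
    five_mul_T_four_mul_add_add_one (by decide) s
  have e6 : 5 * T (4 * s + 6 + 1) = lucas (4 * s + 6) + 2 :=
    five_mul_T_four_mul_add_add_one (by decide) s
  have f5 : (Nat.fib (4 * s + 5) : ℤ) = Nat.fib (4 * s + 3) + Nat.fib (4 * s + 4) :=
    mod_cast Nat.fib_add_two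
  have f6 : (Nat.fib (4 * s + 6) : ℤ) = Nat.fib (4 * s + 4) + Nat.fib (4 * s + 5) :=
    mod_cast Nat.fib_add_two
  have f7 : (Nat.fib (4 * s + 7) : ℤ) = Nat.fib (4 * s + 5) + Nat.fib (4 * s + 6) :=
    mod_cast Nat.fib_add_two
  rw [show 4 * (s + 1) - 1 = 4 * s + 3 by omega]
  simp only [lucas, mul_add, mul_one, add_assoc, Nat.reduceAdd] at e3 e4 e5 e6 ⊢
  refine ⟨by linarith, by linarith, by linarith, by linarith⟩
end
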